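/- Let p be an odd prime and K a field of characteristic p. The modular group M_{p^3} = ⟨x, y | x^{p^2} = y^p = 1, y x y^{-1} = x^{1+p}⟩ of order p^3 and exponent p^2 embeds into U_{p+1}(K), but does not embed into U_r(K) for any r ≤ p. -/

import Mathlib

/-!
Since `|M| = p³` and every element of `M` is of the form `x ^ a * y ^ b`, this normal form is
unique for `a < p²`, `b < p`; hence any two elements of a group satisfying the defining relations
are the images of `x` and `y` under a homomorphism out of `M`.

In `U_{p+1}(K)` take `X = 1 + N`, with `N` the nilpotent Jordan block, and `Y = 1 + E`, with
`E = E_{0,p-1}`. Then `X ^ p = 1 + N ^ p` and `X ^ (p²) = 1`; since `E * N = N ^ p` and `N * E = 0`,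
`Y * X * Y⁻¹ = X + N ^ p = X ^ (1 + p)`. The entries `(0,1)`, `(0,p)` and `(0,p-1)` of
`X ^ a * Y ^ b = X ^ a + b • E` show that it is `1` only if `p² ∣ a` and `p ∣ b`, so the
homomorphism is injective.

Conversely, an `r × r` unipotent upper-triangular `A` has characteristic polynomial `(T - 1) ^ r`,
so `(A - 1) ^ r = 0` and for `r ≤ p` Frobenius gives `A ^ p - 1 = (A - 1) ^ p = 0`. An embedding
into `U_r(K)` would therefore force `x ^ p = 1`, whereas `x` has order `p²`.
-/

/-- An upper-triangular unipotent matrix: zeros below the diagonal, ones on the diagonal. -/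
def IsUnipotentUpper {R : Type*} [CommRing R] {n : ℕ} (A : Matrix (Fin n) (Fin n) R) : Prop :=
  (∀ i j : Fin n, j < i → A i j = 0) ∧ ∀ i : Fin n, A i i = 1

section Metacyclic

variable {G : Type*} [Group G] {u v : G} {e m n : ℕ}

theorem semiconjBy_pow_pow (h : SemiconjBy v u (u ^ e)) (j k : ℕ) :
    SemiconjBy (v ^ j) (u ^ k) (u ^ (e ^ j * k)) := by
  induction j generalizing k with
  | zero => simp
  | succ j ih =>
    rw [pow_succ, pow_succ, mul_assoc]
    exact (ih (e * k)).mul_left (by simpa only [← pow_mul] using h.pow_right k)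

theorem pow_mul_pow_mul_pow_mul_pow (h : v * u = u ^ e * v) (a b c d : ℕ) :
    u ^ a * v ^ b * (u ^ c * v ^ d) = u ^ (a + e ^ b * c) * v ^ (b + d) := by
  rw [mul_assoc, ← mul_assoc (v ^ b), semiconjBy_pow_pow h b c, pow_add, pow_add]
  group

theorem exists_eq_pow_mul_pow (h : v * u = u ^ e * v) (hu : u ^ m = 1) (hv : v ^ n = 1)
    (hm : m ≠ 0) (hn : n ≠ 0) (hgen : Subgroup.closure {u, v} = ⊤) (g : G) :
    ∃ a b : ℕ, g = u ^ a * v ^ b := by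
  have hinv {w : G} {k : ℕ} (hw : w ^ k = 1) (hk : k ≠ 0) : w⁻¹ = w ^ (k - 1) :=
    inv_eq_of_mul_eq_one_right (by rw [← pow_succ', Nat.sub_add_cancel (by omega), hw])
  have hg : g ∈ Subgroup.closure {u, v} := hgen ▸ Subgroup.mem_top g
  induction hg using Subgroup.closure_induction'' with
  | mem w hw =>
    rcases hw with rfl | rfl
    exacts [⟨1, 0, by simp⟩, ⟨0, 1, by simp⟩]
  | inv_mem w hw =>
    rcases hw with rfl | rfl
    exacts [⟨m - 1, 0, by simp [hinv hu hm]⟩, ⟨0, n - 1, by simp [hinv hv hn]⟩]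
  | one => exact ⟨0, 0, by simp⟩
  | mul w w' _ _ hw hw' =>
    obtain ⟨a, b, rfl⟩ := hw
    obtain ⟨c, d, rfl⟩ := hw'
    exact ⟨_, _, pow_mul_pow_mul_pow_mul_pow h a b c d⟩

theorem pow_mul_pow_eq_pow_mul_pow_iff (h : v * u = u ^ e * v) (hu : u ^ m = 1)
    (hv : v ^ n = 1) (hm : m ≠ 0) (hn : n ≠ 0) (hgen : Subgroup.closure {u, v} = ⊤)
    (hcard : Nat.card G = m * n) {a b c d : ℕ} :
    u ^ a * v ^ b = u ^ c * v ^ d ↔ a ≡ c [MOD m] ∧ b ≡ d [MOD n] := by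
  let f : Fin m × Fin n → G := fun ij => u ^ (ij.1 : ℕ) * v ^ (ij.2 : ℕ)
  have hf : ∀ a b : ℕ, u ^ a * v ^ b =
      f (⟨a % m, Nat.mod_lt _ (by omega)⟩, ⟨b % n, Nat.mod_lt _ (by omega)⟩) := fun a b => by
    simp only [f, ← pow_eq_pow_mod a hu, ← pow_eq_pow_mod b hv]
  have hsurj : Function.Surjective f := fun g => by
    obtain ⟨a, b, rfl⟩ := exists_eq_pow_mul_pow h hu hv hm hn hgen g
    exact ⟨_, (hf a b).symm⟩
  have hinj : Function.Injective f :=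
    (hsurj.bijective_of_nat_card_le (by simp [hcard])).injective
  rw [hf a b, hf c d, hinj.eq_iff]
  simp [Nat.ModEq]

theorem exists_monoidHom_pow_mul_pow {H : Type*} [Group H] {u' v' : H}
    (h : v * u = u ^ e * v) (hu : u ^ m = 1) (hv : v ^ n = 1) (hm : m ≠ 0) (hn : n ≠ 0)
    (hgen : Subgroup.closure {u, v} = ⊤) (hcard : Nat.card G = m * n)
    (h' : v' * u' = u' ^ e * v') (hu' : u' ^ m = 1) (hv' : v' ^ n = 1) :
    ∃ φ : G →* H, ∀ a b : ℕ, φ (u ^ a * v ^ b) = u' ^ a * v' ^ b := by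
  choose a b hab using exists_eq_pow_mul_pow h hu hv hm hn hgen
  let f : G → H := fun g => u' ^ a g * v' ^ b g
  have hf : ∀ c d : ℕ, f (u ^ c * v ^ d) = u' ^ c * v' ^ d := fun c d => by
    obtain ⟨hc, hd⟩ :=
      (pow_mul_pow_eq_pow_mul_pow_iff h hu hv hm hn hgen hcard).1 (hab (u ^ c * v ^ d)).symm
    exact congr_arg₂ (· * ·)
      (pow_eq_pow_iff_modEq.2 (hc.of_dvd (orderOf_dvd_of_pow_eq_one hu')))
      (pow_eq_pow_iff_modEq.2 (hd.of_dvd (orderOf_dvd_of_pow_eq_one hv')))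
  refine ⟨MonoidHom.mk' f fun g g' => ?_, hf⟩
  rw [hab g, hab g', pow_mul_pow_mul_pow_mul_pow h, hf, hf, hf, pow_mul_pow_mul_pow_mul_pow h']

end Metacyclic

section Unipotent

variable {R : Type*} [CommRing R] {r : ℕ} {A B : Matrix (Fin r) (Fin r) R}

theorem IsUnipotentUpper.isUpperTriangular (hA : IsUnipotentUpper A) : A.IsUpperTriangular :=
  fun i j hij => hA.1 i j hij

theorem isUnipotentUpper_one : IsUnipotentUpper (1 : Matrix (Fin r) (Fin r) R) :=
  ⟨fun _ _ hij => Matrix.one_apply_ne hij.ne', fun _ => Matrix.one_apply_eq _⟩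

theorem IsUnipotentUpper.mul (hA : IsUnipotentUpper A) (hB : IsUnipotentUpper B) :
    IsUnipotentUpper (A * B) := by
  refine ⟨fun i j hij => hA.isUpperTriangular.mul hB.isUpperTriangular hij, fun i => ?_⟩
  rw [Matrix.mul_apply, Finset.sum_eq_single i, hA.2, hB.2, one_mul]
  · intro k _ hki
    rcases hki.lt_or_gt with hk | hk
    · rw [hA.1 i k hk, zero_mul]
    · rw [hB.1 k i hk, mul_zero]
  · simp

theorem IsUnipotentUpper.pow (hA : IsUnipotentUpper A) (k : ℕ) : IsUnipotentUpper (A ^ k) := by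
  induction k with
  | zero => exact isUnipotentUpper_one
  | succ k ih => exact pow_succ A k ▸ ih.mul hA

theorem IsUnipotentUpper.sub_one_pow_eq_zero (hA : IsUnipotentUpper A) : (A - 1) ^ r = 0 := by
  have hchar : A.charpoly = (Polynomial.X - 1) ^ r := by
    simp [Matrix.charpoly_of_isUpperTriangular A hA.isUpperTriangular, hA.2]
  simpa [hchar] using Matrix.aeval_self_charpoly A

theorem IsUnipotentUpper.pow_char_eq_one {p : ℕ} [Fact p.Prime] [CharP R p]
    (hA : IsUnipotentUpper A) (hr : r ≤ p) : A ^ p = 1 := by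
  cases isEmpty_or_nonempty (Fin r)
  · exact Subsingleton.elim _ _
  have hsub : (A - 1) ^ p = 0 := by
    rw [← Nat.add_sub_cancel' hr, pow_add, hA.sub_one_pow_eq_zero, zero_mul]
  rwa [sub_pow_char_of_commute p (Commute.one_right A), one_pow, sub_eq_zero] at hsub

end Unipotent

theorem one_add_pow_of_mul_self_eq_zero {R : Type*} [Semiring R] {a : R} (ha : a * a = 0)
    (k : ℕ) : (1 + a) ^ k = 1 + k • a := by
  induction k with
  | zero => simp
  | succ k ih =>
    rw [pow_succ, ih]
    simp only [mul_add, add_mul, mul_one, one_mul, smul_mul_assoc, ha, smul_zero, succ_nsmul]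
    abel

section ShiftMatrix

variable (R : Type*) [Semiring R] (n : ℕ)

def shiftMatrix (k : ℕ) : Matrix (Fin n) (Fin n) R :=
  Matrix.of fun i j => if (j : ℕ) = i + k then 1 else 0

variable {R n}

theorem shiftMatrix_apply (k : ℕ) (i j : Fin n) :
    shiftMatrix R n k i j = if (j : ℕ) = i + k then 1 else 0 := rfl

theorem shiftMatrix_mul_apply (k : ℕ) (A : Matrix (Fin n) (Fin n) R) (i j : Fin n) :
    (shiftMatrix R n k * A) i j = if h : (i : ℕ) + k < n then A ⟨i + k, h⟩ j else 0 := by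
  rw [Matrix.mul_apply]
  split_ifs with h
  · rw [Finset.sum_eq_single ⟨i + k, h⟩ (fun l _ hl => by
      rw [shiftMatrix_apply, if_neg (fun h' => hl (Fin.ext h')), zero_mul]) (by simp)]
    simp [shiftMatrix_apply]
  · exact Finset.sum_eq_zero fun l _ => by
      rw [shiftMatrix_apply, if_neg (by omega), zero_mul]

theorem mul_shiftMatrix_apply (k : ℕ) (A : Matrix (Fin n) (Fin n) R) (i j : Fin n) :
    (A * shiftMatrix R n k) i j = if h : k ≤ (j : ℕ) then A i ⟨j - k, by omega⟩ else 0 := by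
  rw [Matrix.mul_apply]
  split_ifs with h
  · rw [Finset.sum_eq_single ⟨j - k, by omega⟩ (fun l _ hl => by
      rw [shiftMatrix_apply, if_neg (fun h' => hl (Fin.ext (by simp; omega))), mul_zero])
      (by simp)]
    simp [shiftMatrix_apply]
    omega
  · exact Finset.sum_eq_zero fun l _ => by
      rw [shiftMatrix_apply, if_neg (by omega), mul_zero]

theorem shiftMatrix_zero : shiftMatrix R n 0 = 1 := by
  ext i j
  simp [shiftMatrix_apply, Matrix.one_apply, Fin.ext_iff, eq_comm]

theorem shiftMatrix_eq_zero {k : ℕ} (hk : n ≤ k) : shiftMatrix R n k = 0 := by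
  ext i j
  exact if_neg (by omega)

theorem shiftMatrix_mul_shiftMatrix (k l : ℕ) :
    shiftMatrix R n k * shiftMatrix R n l = shiftMatrix R n (k + l) := by
  ext i j
  rw [shiftMatrix_mul_apply]
  split_ifs with h
  · simp only [shiftMatrix_apply]
    congr 1
    simp only [add_assoc]
  · rw [shiftMatrix_apply, if_neg (by omega)]

theorem shiftMatrix_one_pow (k : ℕ) : shiftMatrix R n 1 ^ k = shiftMatrix R n k := by
  induction k with
  | zero => rw [pow_zero, shiftMatrix_zero]
  | succ k ih => rw [pow_succ, ih, shiftMatrix_mul_shiftMatrix]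

end ShiftMatrix

section ModularModel

variable (R : Type*) [CommRing R] (p : ℕ)

def modularX : Matrix (Fin (p + 1)) (Fin (p + 1)) R := 1 + shiftMatrix R (p + 1) 1

def modularE : Matrix (Fin (p + 1)) (Fin (p + 1)) R := Matrix.single 0 ⟨p - 1, by omega⟩ 1

def modularY : Matrix (Fin (p + 1)) (Fin (p + 1)) R := 1 + modularE R p

variable {R p}

theorem modularE_mul_self (hp : 2 ≤ p) : modularE R p * modularE R p = 0 := by
  unfold modularE
  exact Matrix.single_mul_single_of_ne (h := Fin.ne_of_val_ne (by simp; omega)) ..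

theorem shiftMatrix_mul_modularE {k : ℕ} (hk : k ≠ 0) :
    shiftMatrix R (p + 1) k * modularE R p = 0 := by
  ext i j
  rw [shiftMatrix_mul_apply]
  split_ifs with h
  · simp [modularE, Matrix.single_apply, Fin.ext_iff]
    omega
  · rfl

theorem modularE_mul_shiftMatrix_one (hp : 1 ≤ p) :
    modularE R p * shiftMatrix R (p + 1) 1 = shiftMatrix R (p + 1) p := by
  ext i j
  rw [mul_shiftMatrix_apply]
  split_ifs with h
  · simp only [modularE, Matrix.single_apply, shiftMatrix_apply, Fin.ext_iff]
    congr 1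
    simp only [Fin.val_zero, eq_iff_iff]
    omega
  · rw [shiftMatrix_apply, if_neg (by omega)]

theorem isUnipotentUpper_modularX : IsUnipotentUpper (modularX R p) := by
  refine ⟨fun i j hij => ?_, fun i => ?_⟩
  · rw [Fin.lt_def] at hij
    simp only [modularX, Matrix.add_apply, shiftMatrix_apply, Matrix.one_apply, Fin.ext_iff]
    rw [if_neg (by omega), if_neg (by omega), add_zero]
  · simp [modularX, shiftMatrix_apply]

theorem isUnipotentUpper_modularY (hp : 2 ≤ p) : IsUnipotentUpper (modularY R p) := by
  refine ⟨fun i j hij => ?_, fun i => ?_⟩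
  · rw [Fin.lt_def] at hij
    simp only [modularY, modularE, Matrix.add_apply, Matrix.single_apply, Matrix.one_apply,
      Fin.ext_iff, Fin.val_zero]
    rw [if_neg (by omega), if_neg (by omega), add_zero]
  · simp only [modularY, modularE, Matrix.add_apply, Matrix.single_apply, Matrix.one_apply_eq,
      Fin.ext_iff, Fin.val_zero]
    rw [if_neg (by omega), add_zero]

theorem mul_modularX (A : Matrix (Fin (p + 1)) (Fin (p + 1)) R) :
    A * modularX R p = A + A * shiftMatrix R (p + 1) 1 := by
  rw [modularX, mul_add, mul_one]

theorem modularX_pow_mul_modularE (a : ℕ) : modularX R p ^ a * modularE R p = modularE R p := by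
  have hXE : modularX R p * modularE R p = modularE R p := by
    rw [modularX, add_mul, one_mul, shiftMatrix_mul_modularE one_ne_zero, add_zero]
  induction a with
  | zero => rw [pow_zero, one_mul]
  | succ a ih => rw [pow_succ, mul_assoc, hXE, ih]

theorem modularX_pow_apply_zero_one (hp : 1 ≤ p) (a : ℕ) :
    (modularX R p ^ a) 0 ⟨1, by omega⟩ = a := by
  induction a with
  | zero => simp [Fin.ext_iff]
  | succ a ih =>
    rw [pow_succ, mul_modularX, Matrix.add_apply, mul_shiftMatrix_apply, dif_pos le_rfl, ih]
    simp [(isUnipotentUpper_modularX.pow a).2 0]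

variable [Fact p.Prime] [CharP R p]

theorem modularX_pow_char : modularX R p ^ p = 1 + shiftMatrix R (p + 1) p := by
  rw [modularX, add_pow_char_of_commute p (Commute.one_left _), one_pow, shiftMatrix_one_pow]

theorem modularX_pow_char_sq : modularX R p ^ (p ^ 2) = 1 := by
  have hp : 2 ≤ p := (Fact.out : p.Prime).two_le
  rw [sq, pow_mul, modularX_pow_char, add_pow_char_of_commute p (Commute.one_left _), one_pow,
    ← shiftMatrix_one_pow, ← pow_mul, shiftMatrix_one_pow, shiftMatrix_eq_zero (by nlinarith),
    add_zero]

theorem modularY_pow_char : modularY R p ^ p = 1 := by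
  rw [modularY, one_add_pow_of_mul_self_eq_zero (modularE_mul_self (Fact.out : p.Prime).two_le),
    modularE, Matrix.smul_single, nsmul_one, CharP.cast_eq_zero, Matrix.single_zero, add_zero]

theorem modularY_mul_modularX :
    modularY R p * modularX R p = modularX R p ^ (1 + p) * modularY R p := by
  have hp : 1 ≤ p := (Fact.out : p.Prime).one_le
  have hX : modularX R p ^ (1 + p) = 1 + shiftMatrix R (p + 1) 1 + shiftMatrix R (p + 1) p := by
    rw [pow_add, pow_one, modularX_pow_char, mul_add, mul_one, modularX, add_mul, one_mul,
      shiftMatrix_mul_shiftMatrix, shiftMatrix_eq_zero (k := 1 + p) (by omega), add_zero]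
  rw [hX, modularY, modularX]
  simp only [mul_add, add_mul, mul_one, one_mul, modularE_mul_shiftMatrix_one hp,
    shiftMatrix_mul_modularE one_ne_zero, shiftMatrix_mul_modularE (by omega : p ≠ 0), add_zero]
  abel

theorem dvd_of_modularX_pow_mul_modularY_pow_eq_one (hp : 3 ≤ p) {a b : ℕ}
    (h : modularX R p ^ a * modularY R p ^ b = 1) : p ^ 2 ∣ a ∧ p ∣ b := by
  have hsum : modularX R p ^ a + b • modularE R p = 1 := by
    rwa [modularY, one_add_pow_of_mul_self_eq_zero (modularE_mul_self (by omega)), mul_add,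
      mul_one, mul_smul_comm, modularX_pow_mul_modularE] at h
  obtain ⟨c, rfl⟩ : p ∣ a := by
    have ha := congr_fun₂ hsum 0 ⟨1, by omega⟩
    rw [Matrix.add_apply, modularX_pow_apply_zero_one (by omega)] at ha
    simp [modularE, Fin.ext_iff, show p ≠ 2 by omega] at ha
    exact (CharP.cast_eq_zero_iff R p a).1 ha
  have hS : shiftMatrix R (p + 1) p * shiftMatrix R (p + 1) p = 0 := by
    rw [shiftMatrix_mul_shiftMatrix, shiftMatrix_eq_zero (by omega)]
  rw [pow_mul, modularX_pow_char, one_add_pow_of_mul_self_eq_zero hS, add_assoc,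
    add_eq_left] at hsum
  have hc := congr_fun₂ hsum 0 (Fin.last p)
  have hb := congr_fun₂ hsum 0 ⟨p - 1, by omega⟩
  simp only [Matrix.add_apply, Matrix.smul_apply, Matrix.zero_apply, shiftMatrix_apply, modularE,
    Matrix.single_apply] at hc hb
  simp [Fin.ext_iff, show p - 1 ≠ p by omega] at hc hb
  exact ⟨sq p ▸ mul_dvd_mul_left p ((CharP.cast_eq_zero_iff R p c).1 hc),
    (CharP.cast_eq_zero_iff R p b).1 hb⟩

end ModularModel

/-- For `p` an odd prime and `K` of characteristic `p`, the modular group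
`M_{p³} = ⟨x, y ∣ x^{p²} = y^p = 1, y x y⁻¹ = x^{1+p}⟩` of order `p³` (realized here as any
group `M` of order `p³` generated by `x, y` satisfying these relations) embeds into
`U_{p+1}(K)`, but does not embed into `U_r(K)` for any `r ≤ p`. -/
theorem stmt9 (p : ℕ) (hp : p.Prime) (hodd : p ≠ 2)
    (K : Type*) [Field K] [CharP K p]
    (M : Type*) [Group M] (x y : M)
    (hgen : Subgroup.closure ({x, y} : Set M) = ⊤)
    (hx : x ^ (p ^ 2) = 1) (hy : y ^ p = 1)
    (hrel : y * x * y⁻¹ = x ^ (1 + p))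
    (hcard : Nat.card M = p ^ 3) :
    (∃ φ : M →* (Matrix (Fin (p + 1)) (Fin (p + 1)) K)ˣ,
        Function.Injective φ ∧
        ∀ g, IsUnipotentUpper ((φ g : (Matrix (Fin (p + 1)) (Fin (p + 1)) K)ˣ) :
          Matrix (Fin (p + 1)) (Fin (p + 1)) K)) ∧
    ∀ r ≤ p, ¬ ∃ φ : M →* (Matrix (Fin r) (Fin r) K)ˣ,
        Function.Injective φ ∧
        ∀ g, IsUnipotentUpper ((φ g : (Matrix (Fin r) (Fin r) K)ˣ) :
          Matrix (Fin r) (Fin r) K) := by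
  have : Fact p.Prime := ⟨hp⟩
  have hp3 : 3 ≤ p := by have := hp.two_le; omega
  have hp2 : p ^ 2 ≠ 0 := by positivity
  have hyx : y * x = x ^ (1 + p) * y := mul_inv_eq_iff_eq_mul.1 hrel
  have hcard' : Nat.card M = p ^ 2 * p := by rw [hcard]; ring
  have hnf := exists_eq_pow_mul_pow hyx hx hy hp2 hp.ne_zero hgen
  let X := Units.ofPowEqOne _ _ (modularX_pow_char_sq (R := K)) hp2
  let Y := Units.ofPowEqOne _ _ (modularY_pow_char (R := K)) hp.ne_zero
  obtain ⟨φ, hφ⟩ := exists_monoidHom_pow_mul_pow hyx hx hy hp2 hp.ne_zero hgen hcard'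
    (u' := X) (v' := Y) (Units.ext modularY_mul_modularX) (Units.pow_ofPowEqOne _ _)
    (Units.pow_ofPowEqOne _ _)
  refine ⟨⟨φ, (injective_iff_map_eq_one φ).2 fun g hg => ?_, fun g => ?_⟩, ?_⟩
  · obtain ⟨a, b, rfl⟩ := hnf g
    obtain ⟨⟨c, rfl⟩, ⟨d, rfl⟩⟩ := dvd_of_modularX_pow_mul_modularY_pow_eq_one hp3
      (by simpa [hφ, X, Y] using congr_arg Units.val hg)
    simp [pow_mul, hx, hy]
  · obtain ⟨a, b, rfl⟩ := hnf g
    simpa [hφ, X, Y] using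
      (isUnipotentUpper_modularX.pow a).mul ((isUnipotentUpper_modularY hp.two_le).pow b)
  · rintro r hr ⟨ψ, hψ, hunip⟩
    have hxp : x ^ p = 1 := hψ (by ext1; simp [(hunip x).pow_char_eq_one hr])
    have hmod : p ≡ 0 [MOD p ^ 2] := ((pow_mul_pow_eq_pow_mul_pow_iff hyx hx hy hp2 hp.ne_zero
      hgen hcard' (a := p) (b := 0) (c := 0) (d := 0)).1 (by simp [hxp])).1
    have hle := Nat.le_of_dvd hp.pos (Nat.modEq_zero_iff_dvd.1 hmod)
    nlinarith
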